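/- (Lemma 8(i)) Let p ∈ (0,1), let Σ be positive definite, and let Y ⊆ ℝ^m be nonempty and such that v_k(y) ≠ 0 for some y ∈ Y and some k ∈ {1,…,K}. Then χ₁⁻¹(p) ≤ μ(p, Y; N_Σ, Σ) ≤ χ_d⁻¹(p). -/

import Mathlib

open MeasureTheory ProbabilityTheory Matrix
open scoped ENNReal Pointwise

/-- The ellipsoid `U_Σ = {u : uᵀ Σ⁻¹ u ≤ 1}`. -/
def USet {d : ℕ} (Sg : Matrix (Fin d) (Fin d) ℝ) : Set (Fin d → ℝ) :=
  {u | u ⬝ᵥ (Sg⁻¹ *ᵥ u) ≤ 1}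

/-- `r_k(x; Σ) = max_{u ∈ U_Σ} g_k(x, u)` where `g_k(x, θ) = θᵀ v_k(x)`. -/
noncomputable def rk {d m K : ℕ} (v : Fin K → (Fin m → ℝ) → (Fin d → ℝ))
    (k : Fin K) (x : Fin m → ℝ) (Sg : Matrix (Fin d) (Fin d) ℝ) : ℝ :=
  sSup ((fun u => u ⬝ᵥ v k x) '' USet Sg)

/-- `S(λ, Y; Σ)`, the set of parameter errors that are uniformly small over `Y`. -/
noncomputable def SErr {d m K : ℕ} (v : Fin K → (Fin m → ℝ) → (Fin d → ℝ))
    (lam : ℝ) (Y : Set (Fin m → ℝ)) (Sg : Matrix (Fin d) (Fin d) ℝ) : Set (Fin d → ℝ) :=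
  {Δ | ∀ k, ∀ y ∈ Y, |Δ ⬝ᵥ v k y| ≤ lam * rk v k y Sg}

/-- Feasibility for the robust optimization problem with scale `lam`, center `θ`, shape `Σ`. -/
def Feasible {d m K : ℕ} (X : Set (Fin m → ℝ)) (v : Fin K → (Fin m → ℝ) → (Fin d → ℝ))
    (lam : ℝ) (θ : Fin d → ℝ) (Sg : Matrix (Fin d) (Fin d) ℝ) (x : Fin m → ℝ) : Prop :=
  x ∈ X ∧ ∀ k, ∀ u ∈ USet Sg, 0 ≤ (θ + lam • u) ⬝ᵥ v k x

/-- Optimal solution of the robust optimization problem. -/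
def IsOptimal {d m K : ℕ} (X : Set (Fin m → ℝ)) (f : (Fin m → ℝ) → ℝ)
    (v : Fin K → (Fin m → ℝ) → (Fin d → ℝ))
    (lam : ℝ) (θ : Fin d → ℝ) (Sg : Matrix (Fin d) (Fin d) ℝ) (x : Fin m → ℝ) : Prop :=
  Feasible X v lam θ Sg x ∧ ∀ y, Feasible X v lam θ Sg y → f x ≤ f y

open Classical in
/-- The true objective `f*`, which is `∞` when a true constraint is violated. -/
noncomputable def fStar {d m K : ℕ} (f : (Fin m → ℝ) → ℝ)
    (v : Fin K → (Fin m → ℝ) → (Fin d → ℝ)) (θs : Fin d → ℝ) (x : Fin m → ℝ) : EReal :=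
  if ∀ k, 0 ≤ θs ⬝ᵥ v k x then (f x : EReal) else ⊤

/-- The standard Gaussian measure on `ℝ^d`. -/
noncomputable def stdGaussian (d : ℕ) : Measure (Fin d → ℝ) :=
  Measure.pi fun _ => gaussianReal 0 1

open Classical in
/-- The positive semidefinite square root (junk value `0` off the psd cone). -/
noncomputable def matSqrt {d : ℕ} (A : Matrix (Fin d) (Fin d) ℝ) : Matrix (Fin d) (Fin d) ℝ :=
  if h : A.PosSemidef then
    h.1.eigenvectorUnitary.1 * diagonal ((↑) ∘ (√·) ∘ h.1.eigenvalues) *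
      (star h.1.eigenvectorUnitary : Matrix (Fin d) (Fin d) ℝ)
  else 0

/-- The centered Gaussian measure on `ℝ^d` with covariance `A`. -/
noncomputable def gaussOf {d : ℕ} (A : Matrix (Fin d) (Fin d) ℝ) : Measure (Fin d → ℝ) :=
  (stdGaussian d).map (fun z => matSqrt A *ᵥ z)

/-- The Euclidean norm on `Fin d → ℝ`. -/
noncomputable def euclNorm {d : ℕ} (z : Fin d → ℝ) : ℝ := Real.sqrt (∑ i, z i ^ 2)

/-- Quantile function of the chi distribution with `d` degrees of freedom. -/
noncomputable def chiQuantile (d : ℕ) (p : ℝ) : ℝ :=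
  sInf {t : ℝ | 0 ≤ t ∧ p ≤ (stdGaussian d {z | euclNorm z ≤ t}).toReal}

/-- The minimum spatial uniform bound `μ(p, Y; P, Σ)` (`⊤` when infeasible, `0` for `p ≤ 0`). -/
noncomputable def muB {d m K : ℕ} (v : Fin K → (Fin m → ℝ) → (Fin d → ℝ)) (p : ℝ)
    (Y : Set (Fin m → ℝ)) (P : Measure (Fin d → ℝ)) (Sg : Matrix (Fin d) (Fin d) ℝ) : ℝ≥0∞ :=
  ⨅ (μ : ℝ) (_ : 0 ≤ μ ∧ ENNReal.ofReal p ≤ P (SErr v μ Y Sg)), ENNReal.ofReal μ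

/-!
Write `Σ = A²` with `A = Σ^{1/2}` symmetric, so that `N_Σ` is the law of `A z` for a standard
Gaussian `z`, and `U_Σ` is the image under `A` of the Euclidean unit ball; hence
`r_k(y; Σ) = ‖A v_k(y)‖`. By Cauchy–Schwarz, `|⟨A z, v_k(y)⟩| = |⟨z, A v_k(y)⟩| ≤ ‖z‖ r_k(y; Σ)`,
so the event `‖z‖ ≤ χ_d⁻¹(p)` forces `A z ∈ S(χ_d⁻¹(p), Y; Σ)`, which gives the upper bound.
Conversely, for `v_k(y) ≠ 0` the set `S(μ, Y; Σ)` lies in the slab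
`|⟨Δ, v_k(y)⟩| ≤ μ ‖A v_k(y)‖`, whose `N_Σ`-probability is `P(|N(0,1)| ≤ μ)` by rotation
invariance of the standard Gaussian; so `P(S(μ, Y; Σ)) ≥ p` forces `μ ≥ χ₁⁻¹(p)`.
-/

open scoped RealInnerProductSpace

section Euclidean
variable {d : ℕ}

lemma euclNorm_eq_norm (z : Fin d → ℝ) :
    euclNorm z = ‖(WithLp.toLp 2 z : EuclideanSpace ℝ (Fin d))‖ := by
  rw [euclNorm, EuclideanSpace.norm_eq]
  simp [sq_abs]

lemma dotProduct_eq_inner (x y : Fin d → ℝ) :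
    x ⬝ᵥ y = ⟪(WithLp.toLp 2 x : EuclideanSpace ℝ (Fin d)), WithLp.toLp 2 y⟫ := by
  simp [EuclideanSpace.inner_eq_star_dotProduct, dotProduct_comm]

lemma euclNorm_nonneg (z : Fin d → ℝ) : 0 ≤ euclNorm z := Real.sqrt_nonneg _

lemma euclNorm_pos {z : Fin d → ℝ} : 0 < euclNorm z ↔ z ≠ 0 := by
  rw [euclNorm_eq_norm, norm_pos_iff, Ne, WithLp.toLp_eq_zero]

lemma dotProduct_self_eq_euclNorm_sq (z : Fin d → ℝ) : z ⬝ᵥ z = euclNorm z ^ 2 := by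
  rw [dotProduct_eq_inner, euclNorm_eq_norm, real_inner_self_eq_norm_sq]

lemma abs_dotProduct_le (x y : Fin d → ℝ) : |x ⬝ᵥ y| ≤ euclNorm x * euclNorm y := by
  rw [dotProduct_eq_inner, euclNorm_eq_norm, euclNorm_eq_norm]
  exact abs_real_inner_le_norm _ _

lemma euclNorm_smul (c : ℝ) (z : Fin d → ℝ) : euclNorm (c • z) = |c| * euclNorm z := by
  rw [euclNorm_eq_norm, euclNorm_eq_norm, WithLp.toLp_smul, norm_smul, Real.norm_eq_abs]

lemma measurable_euclNorm : Measurable (euclNorm : (Fin d → ℝ) → ℝ) := by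
  unfold euclNorm; fun_prop

lemma sSup_dotProduct_euclBall (x : Fin d → ℝ) :
    sSup ((· ⬝ᵥ x) '' {z | euclNorm z ≤ 1}) = euclNorm x := by
  refine IsGreatest.csSup_eq ⟨?_, ?_⟩
  · rcases eq_or_ne x 0 with rfl | hx
    · exact ⟨0, by simp [euclNorm], by simp [euclNorm]⟩
    · have hpos : 0 < euclNorm x := euclNorm_pos.2 hx
      refine ⟨(euclNorm x)⁻¹ • x, ?_, ?_⟩
      · simp [euclNorm_smul, abs_of_pos hpos, hpos.ne']
      · simp only [smul_dotProduct, dotProduct_self_eq_euclNorm_sq, smul_eq_mul]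
        field_simp
  · rintro _ ⟨z, hz, rfl⟩
    calc z ⬝ᵥ x ≤ |z ⬝ᵥ x| := le_abs_self _
      _ ≤ euclNorm z * euclNorm x := abs_dotProduct_le z x
      _ ≤ euclNorm x := mul_le_of_le_one_left (euclNorm_nonneg x) hz

end Euclidean

lemma map_inner_stdGaussian {E : Type*} [NormedAddCommGroup E] [InnerProductSpace ℝ E]
    [FiniteDimensional ℝ E] [MeasurableSpace E] [BorelSpace E] {e : E} (he : ‖e‖ = 1) :
    (ProbabilityTheory.stdGaussian E).map (fun x => ⟪e, x⟫) = gaussianReal 0 1 := by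
  have h := IsGaussian.map_eq_gaussianReal (μ := ProbabilityTheory.stdGaussian E) (innerSL ℝ e)
  simp only [integral_strongDual_stdGaussian, variance_dual_stdGaussian, innerSL_apply_norm,
    he] at h
  simpa using h

lemma stdGaussian_map_dotProduct {d : ℕ} {e : Fin d → ℝ} (he : euclNorm e = 1) :
    (stdGaussian d).map (· ⬝ᵥ e) = gaussianReal 0 1 := by
  have hcomp : (· ⬝ᵥ e) = (fun x : EuclideanSpace ℝ (Fin d) => ⟪WithLp.toLp 2 e, x⟫) ∘
      WithLp.toLp 2 := by
    funext z; simp [dotProduct_eq_inner, real_inner_comm]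
  rw [hcomp, ← Measure.map_map (by fun_prop) (by fun_prop), _root_.stdGaussian,
    map_pi_eq_stdGaussian, map_inner_stdGaussian (by rwa [← euclNorm_eq_norm])]

lemma stdGaussian_abs_dotProduct_le {d : ℕ} {u : Fin d → ℝ} (hu : u ≠ 0) (t : ℝ) :
    stdGaussian d {z | |z ⬝ᵥ u| ≤ t * euclNorm u} = gaussianReal 0 1 {x | |x| ≤ t} := by
  have hpos : 0 < euclNorm u := euclNorm_pos.2 hu
  have he : euclNorm ((euclNorm u)⁻¹ • u) = 1 := by
    rw [euclNorm_smul, abs_of_pos (inv_pos.2 hpos), inv_mul_cancel₀ hpos.ne']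
  have hslab : {z | |z ⬝ᵥ u| ≤ t * euclNorm u} =
      (· ⬝ᵥ (euclNorm u)⁻¹ • u) ⁻¹' {x | |x| ≤ t} := by
    ext z
    simp only [Set.mem_ofPred_eq, Set.mem_preimage, dotProduct_smul, smul_eq_mul, abs_mul,
      abs_of_pos (inv_pos.2 hpos), inv_mul_le_iff₀ hpos, mul_comm t]
  rw [hslab, ← Measure.map_apply (by fun_prop) (measurableSet_le (by fun_prop) (by fun_prop)),
    stdGaussian_map_dotProduct he]

lemma stdGaussian_one_euclNorm_le (t : ℝ) :
    stdGaussian 1 {z | euclNorm z ≤ t} = gaussianReal 0 1 {x | |x| ≤ t} := by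
  have h1 : euclNorm (fun _ : Fin 1 => (1 : ℝ)) = 1 := by simp [euclNorm]
  have hnorm : ∀ z : Fin 1 → ℝ, euclNorm z = |z ⬝ᵥ fun _ => 1| := by
    intro z; simp [euclNorm, Real.sqrt_sq_eq_abs, dotProduct]
  simpa [h1, hnorm] using stdGaussian_abs_dotProduct_le (u := fun _ : Fin 1 => (1 : ℝ))
    (by simp [funext_iff]) t

open Filter Topology in
lemma le_cdf_sInf {ν : Measure ℝ} [IsProbabilityMeasure ν] {p : ℝ} (hp : p < 1) :
    p ≤ cdf ν (sInf {t | 0 ≤ t ∧ p ≤ cdf ν t}) := by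
  set S := {t | 0 ≤ t ∧ p ≤ cdf ν t}
  have hne : S.Nonempty := by
    obtain ⟨t, ht⟩ := ((tendsto_cdf_atTop ν).eventually (eventually_ge_nhds hp) |>.and
      (eventually_ge_atTop 0)).exists
    exact ⟨t, ht.2, ht.1⟩
  have habove : ∀ t > sInf S, p ≤ cdf ν t := fun t ht => by
    obtain ⟨s, hs, hst⟩ := exists_lt_of_csInf_lt hne ht
    exact hs.2.trans ((cdf ν).mono hst.le)
  have hright : Tendsto (cdf ν) (𝓝[>] sInf S) (𝓝 (cdf ν (sInf S))) :=
    ((cdf ν).right_continuous _).mono_left (nhdsWithin_mono _ Set.Ioi_subset_Ici_self)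
  exact ge_of_tendsto hright (eventually_nhdsWithin_of_forall habove)

instance isProbabilityMeasure_stdGaussian (d : ℕ) : IsProbabilityMeasure (stdGaussian d) := by
  unfold _root_.stdGaussian; infer_instance

instance isProbabilityMeasure_map_euclNorm (d : ℕ) :
    IsProbabilityMeasure ((stdGaussian d).map euclNorm) :=
  Measure.isProbabilityMeasure_map measurable_euclNorm.aemeasurable

lemma cdf_map_euclNorm {d : ℕ} (t : ℝ) :
    cdf ((stdGaussian d).map euclNorm) t = (stdGaussian d {z | euclNorm z ≤ t}).toReal := by
  rw [cdf_eq_real, measureReal_def, Measure.map_apply measurable_euclNorm measurableSet_Iic]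
  rfl

lemma chiQuantile_nonneg (d : ℕ) (p : ℝ) : 0 ≤ chiQuantile d p :=
  Real.sInf_nonneg fun _ ht => ht.1

lemma le_stdGaussian_chiQuantile {d : ℕ} {p : ℝ} (hp : p < 1) :
    p ≤ (stdGaussian d {z | euclNorm z ≤ chiQuantile d p}).toReal := by
  simpa only [chiQuantile, cdf_map_euclNorm] using
    le_cdf_sInf (ν := (stdGaussian d).map euclNorm) hp

lemma chiQuantile_le {d : ℕ} {p t : ℝ} (ht : 0 ≤ t)
    (hp : p ≤ (stdGaussian d {z | euclNorm z ≤ t}).toReal) : chiQuantile d p ≤ t :=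
  csInf_le ⟨0, fun _ hs => hs.1⟩ ⟨ht, hp⟩

lemma Matrix.IsSymm.mulVec_dotProduct {n R : Type*} [Fintype n] [CommSemiring R]
    {M : Matrix n n R} (hM : M.IsSymm) (x y : n → R) :
    (M *ᵥ x) ⬝ᵥ y = x ⬝ᵥ (M *ᵥ y) := by
  rw [dotProduct_mulVec, ← mulVec_transpose, hM.eq]

section MatSqrt
variable {d : ℕ} {Sg : Matrix (Fin d) (Fin d) ℝ}

lemma matSqrt_mul_self (hSg : Sg.PosSemidef) : matSqrt Sg * matSqrt Sg = Sg := by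
  set U := hSg.1.eigenvectorUnitary
  have hU : (star U : Matrix (Fin d) (Fin d) ℝ) * U.1 = 1 := Unitary.star_mul_self_of_mem U.2
  rw [matSqrt, dif_pos hSg]
  conv_rhs => rw [hSg.1.spectral_theorem, Unitary.conjStarAlgAut_apply]
  simp only [Matrix.mul_assoc]
  rw [← Matrix.mul_assoc (star _ : Matrix (Fin d) (Fin d) ℝ) _, hU, Matrix.one_mul,
    ← Matrix.mul_assoc (diagonal _), diagonal_mul_diagonal]
  congr 3
  funext i
  simp [Real.mul_self_sqrt (hSg.eigenvalues_nonneg i)]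

lemma matSqrt_isSymm (hSg : Sg.PosSemidef) : (matSqrt Sg).IsSymm := by
  rw [IsSymm, matSqrt, dif_pos hSg, ← conjTranspose_eq_transpose_of_trivial]
  simp only [conjTranspose_mul, diagonal_conjTranspose, star_eq_conjTranspose,
    conjTranspose_conjTranspose, Matrix.mul_assoc, star_trivial]

lemma isUnit_det_matSqrt (hSg : Sg.PosDef) : IsUnit (matSqrt Sg).det := by
  have h : (matSqrt Sg).det * (matSqrt Sg).det = Sg.det := by
    rw [← det_mul, matSqrt_mul_self hSg.posSemidef]
  exact isUnit_iff_ne_zero.2 fun h0 => hSg.det_pos.ne' (by rw [← h, h0, mul_zero])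

lemma dotProduct_inv_mulVec_eq_euclNorm_sq (hSg : Sg.PosDef) (u : Fin d → ℝ) :
    u ⬝ᵥ (Sg⁻¹ *ᵥ u) = euclNorm ((matSqrt Sg)⁻¹ *ᵥ u) ^ 2 := by
  conv_lhs => rw [← matSqrt_mul_self hSg.posSemidef, Matrix.mul_inv_rev, ← mulVec_mulVec]
  rw [← dotProduct_self_eq_euclNorm_sq, (matSqrt_isSymm hSg.posSemidef).inv.mulVec_dotProduct]

lemma USet_eq_image (hSg : Sg.PosDef) :
    USet Sg = (matSqrt Sg *ᵥ ·) '' {z | euclNorm z ≤ 1} := by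
  have hA := isUnit_det_matSqrt hSg
  ext u
  simp only [USet, Set.mem_ofPred_eq, Set.mem_image, dotProduct_inv_mulVec_eq_euclNorm_sq hSg,
    sq_le_one_iff₀ (euclNorm_nonneg _)]
  constructor
  · intro hu
    exact ⟨_, hu, by rw [mulVec_mulVec, mul_nonsing_inv _ hA, one_mulVec]⟩
  · rintro ⟨z, hz, rfl⟩
    rwa [mulVec_mulVec, nonsing_inv_mul _ hA, one_mulVec]

lemma rk_eq_euclNorm {m K : ℕ} (hSg : Sg.PosDef)
    (v : Fin K → (Fin m → ℝ) → (Fin d → ℝ)) (k : Fin K) (y : Fin m → ℝ) :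
    rk v k y Sg = euclNorm (matSqrt Sg *ᵥ v k y) := by
  rw [rk, USet_eq_image hSg, Set.image_image, ← sSup_dotProduct_euclBall]
  simp only [(matSqrt_isSymm hSg.posSemidef).mulVec_dotProduct]

end MatSqrt

section Bounds
variable {d m K : ℕ} {v : Fin K → (Fin m → ℝ) → (Fin d → ℝ)} {Y : Set (Fin m → ℝ)}
  {Sg : Matrix (Fin d) (Fin d) ℝ} {p : ℝ}

lemma matSqrt_mulVec_mem_SErr (hSg : Sg.PosDef) {t : ℝ} {z : Fin d → ℝ}
    (hz : euclNorm z ≤ t) : matSqrt Sg *ᵥ z ∈ SErr v t Y Sg := by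
  intro k y _
  rw [(matSqrt_isSymm hSg.posSemidef).mulVec_dotProduct, rk_eq_euclNorm hSg]
  exact (abs_dotProduct_le _ _).trans (mul_le_mul_of_nonneg_right hz (euclNorm_nonneg _))

lemma muB_le_chiQuantile (hSg : Sg.PosDef) (hp : p < 1) :
    muB v p Y (gaussOf Sg) Sg ≤ ENNReal.ofReal (chiQuantile d p) := by
  refine iInf₂_le _ ⟨chiQuantile_nonneg d p, ?_⟩
  calc ENNReal.ofReal p ≤ stdGaussian d {z | euclNorm z ≤ chiQuantile d p} :=
        ENNReal.ofReal_le_of_le_toReal (le_stdGaussian_chiQuantile hp)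
    _ ≤ stdGaussian d ((matSqrt Sg *ᵥ ·) ⁻¹' SErr v (chiQuantile d p) Y Sg) :=
        measure_mono fun _ => matSqrt_mulVec_mem_SErr hSg
    _ ≤ gaussOf Sg (SErr v (chiQuantile d p) Y Sg) :=
        Measure.le_map_apply (by fun_prop) _

lemma gaussOf_abs_dotProduct_le (hSg : Sg.PosDef) {w : Fin d → ℝ} (hw : w ≠ 0) (t : ℝ) :
    gaussOf Sg {Δ | |Δ ⬝ᵥ w| ≤ t * euclNorm (matSqrt Sg *ᵥ w)} =
      gaussianReal 0 1 {x | |x| ≤ t} := by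
  have hAw : matSqrt Sg *ᵥ w ≠ 0 := by
    rwa [Ne, ← mulVec_zero (matSqrt Sg), (mulVec_injective_iff_isUnit.2
      ((isUnit_iff_isUnit_det _).2 (isUnit_det_matSqrt hSg))).eq_iff]
  rw [gaussOf, Measure.map_apply (by fun_prop) (measurableSet_le (by fun_prop) (by fun_prop))]
  simp only [Set.preimage_ofPred_eq, (matSqrt_isSymm hSg.posSemidef).mulVec_dotProduct]
  exact stdGaussian_abs_dotProduct_le hAw t

lemma chiQuantile_one_le_muB (hSg : Sg.PosDef) (hv : ∃ y ∈ Y, ∃ k, v k y ≠ 0) :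
    ENNReal.ofReal (chiQuantile 1 p) ≤ muB v p Y (gaussOf Sg) Sg := by
  obtain ⟨y, hy, k, hw⟩ := hv
  refine le_iInf₂ fun t ⟨ht, hp⟩ => ENNReal.ofReal_le_ofReal (chiQuantile_le ht ?_)
  have hslab :
      SErr v t Y Sg ⊆ {Δ | |Δ ⬝ᵥ v k y| ≤ t * euclNorm (matSqrt Sg *ᵥ v k y)} :=
    fun Δ hΔ => rk_eq_euclNorm hSg v k y ▸ hΔ k y hy
  rw [← ENNReal.ofReal_le_iff_le_toReal (measure_ne_top _ _), stdGaussian_one_euclNorm_le,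
    ← gaussOf_abs_dotProduct_le hSg hw]
  exact hp.trans (measure_mono hslab)

end Bounds

theorem stmt16_general {d m K : ℕ}
    (v : Fin K → (Fin m → ℝ) → (Fin d → ℝ))
    (p : ℝ) (hp1 : p < 1)
    (Sg : Matrix (Fin d) (Fin d) ℝ) (hSg : Sg.PosDef)
    (Y : Set (Fin m → ℝ))
    (hv : ∃ y ∈ Y, ∃ k, v k y ≠ 0) :
    ENNReal.ofReal (chiQuantile 1 p) ≤ muB v p Y (gaussOf Sg) Sg ∧
      muB v p Y (gaussOf Sg) Sg ≤ ENNReal.ofReal (chiQuantile d p) :=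
  ⟨chiQuantile_one_le_muB hSg hv, muB_le_chiQuantile hSg hp1⟩

/-- Lemma 8(i): `χ₁⁻¹(p) ≤ μ(p, Y; N_Σ, Σ) ≤ χ_d⁻¹(p)`. -/
theorem stmt16 {d m K : ℕ} (hd : 1 ≤ d) (hm : 1 ≤ m) (hK : 1 ≤ K)
    (v : Fin K → (Fin m → ℝ) → (Fin d → ℝ))
    (p : ℝ) (hp0 : 0 < p) (hp1 : p < 1)
    (Sg : Matrix (Fin d) (Fin d) ℝ) (hSg : Sg.PosDef)
    (Y : Set (Fin m → ℝ)) (hYne : Y.Nonempty)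
    (hv : ∃ y ∈ Y, ∃ k, v k y ≠ 0) :
    ENNReal.ofReal (chiQuantile 1 p) ≤ muB v p Y (gaussOf Sg) Sg ∧
      muB v p Y (gaussOf Sg) Sg ≤ ENNReal.ofReal (chiQuantile d p) :=
  stmt16_general v p hp1 Sg hSg Y hv
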